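/- Let X be a set with two partitions 𝒫₁, 𝒫₂ of X such that every block of 𝒫₁ intersects every block of 𝒫₂ in exactly one point, and let L ⊆ X intersect every block of each partition in exactly one point; let X′, 𝒫₁′, 𝒫₂′, L′ be another such configuration and φ : L → L′ a bijection. Suppose R : X → X is an involution fixing L pointwise which maps every block of 𝒫₁ onto a block of 𝒫₂ and every block of 𝒫₂ onto a block of 𝒫₁, and similarly R′ : X′ → X′ is an involution fixing L′ pointwise which interchanges the blocks of 𝒫₁′ and 𝒫₂′. Let Φ : X → X′ be the unique bijection mapping 𝒫₁-blocks onto 𝒫₁′-blocks and 𝒫₂-blocks onto 𝒫₂′-blocks with Φ|_L = φ. Then Φ ∘ R = R′ ∘ Φ. -/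
import Mathlib


private lemma block_eq_of_mem {X : Type*} {P : Set (Set X)} (h : Setoid.IsPartition P)
    {B B' : Set X} (hB : B ∈ P) (hB' : B' ∈ P) {a : X} (ha : a ∈ B) (ha' : a ∈ B') :
    B = B' := by
  obtain ⟨b, -, hu⟩ := h.2 a
  rw [hu B ⟨hB, ha⟩, hu B' ⟨hB', ha'⟩]

/-- Equivariance of the bijection constructed from transversal foliations: if `R` is an
involution of `X` fixing `L` pointwise and interchanging the blocks of the two
partitions `𝒫₁, 𝒫₂` (each pair of blocks meeting in exactly one point, and `L` meeting
every block in exactly one point), `R'` is likewise for `(X', 𝒫₁', 𝒫₂', L')`, and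
`Φ : X → X'` is the bijection mapping `𝒫ᵢ`-blocks onto `𝒫ᵢ'`-blocks and restricting to
a bijection `φ : L → L'`, then `Φ ∘ R = R' ∘ Φ`. -/
theorem equivariance_of_bijection_from_transversal_foliations
    {X X' : Type*} (P₁ P₂ : Set (Set X)) (P₁' P₂' : Set (Set X'))
    (hP₁ : Setoid.IsPartition P₁) (hP₂ : Setoid.IsPartition P₂)
    (hP₁' : Setoid.IsPartition P₁') (hP₂' : Setoid.IsPartition P₂')
    (hmeet : ∀ B₁ ∈ P₁, ∀ B₂ ∈ P₂, ∃! p, p ∈ B₁ ∩ B₂)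
    (hmeet' : ∀ B₁ ∈ P₁', ∀ B₂ ∈ P₂', ∃! p, p ∈ B₁ ∩ B₂)
    (L : Set X) (L' : Set X')
    (hL₁ : ∀ B ∈ P₁, ∃! p, p ∈ B ∩ L) (hL₂ : ∀ B ∈ P₂, ∃! p, p ∈ B ∩ L)
    (hL₁' : ∀ B ∈ P₁', ∃! p, p ∈ B ∩ L') (hL₂' : ∀ B ∈ P₂', ∃! p, p ∈ B ∩ L')
    (φ : L ≃ L')
    (R : X → X) (hRinv : R ∘ R = id) (hRL : ∀ x ∈ L, R x = x)
    (hR₁₂ : ∀ B ∈ P₁, R '' B ∈ P₂) (hR₂₁ : ∀ B ∈ P₂, R '' B ∈ P₁)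
    (R' : X' → X') (hR'inv : R' ∘ R' = id) (hR'L : ∀ x ∈ L', R' x = x)
    (hR'₁₂ : ∀ B ∈ P₁', R' '' B ∈ P₂') (hR'₂₁ : ∀ B ∈ P₂', R' '' B ∈ P₁')
    (Φ : X → X') (hΦbij : Function.Bijective Φ)
    (hΦ₁ : ∀ B ∈ P₁, Φ '' B ∈ P₁') (hΦ₂ : ∀ B ∈ P₂, Φ '' B ∈ P₂')
    (hΦL : ∀ x : L, Φ (x : X) = (φ x : X')) :
    Φ ∘ R = R' ∘ Φ := by
  funext x
  simp only [Function.comp_apply]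
  obtain ⟨B₁, ⟨hB₁, hx₁⟩, -⟩ := hP₁.2 x
  obtain ⟨B₂, ⟨hB₂, hx₂⟩, -⟩ := hP₂.2 x
  obtain ⟨ℓ₁, ⟨hℓ₁B, hℓ₁L⟩, -⟩ := hL₁ B₁ hB₁
  obtain ⟨ℓ₂, ⟨hℓ₂B, hℓ₂L⟩, -⟩ := hL₂ B₂ hB₂
  -- the four blocks
  have hA₁ : Φ '' (R '' B₂) ∈ P₁' := hΦ₁ _ (hR₂₁ B₂ hB₂)
  have hA₁' : R' '' (Φ '' B₂) ∈ P₁' := hR'₂₁ _ (hΦ₂ B₂ hB₂)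
  have hA₂ : Φ '' (R '' B₁) ∈ P₂' := hΦ₂ _ (hR₁₂ B₁ hB₁)
  have hA₂' : R' '' (Φ '' B₁) ∈ P₂' := hR'₁₂ _ (hΦ₁ B₁ hB₁)
  have hΦℓ₂L' : Φ ℓ₂ ∈ L' := by rw [hΦL ⟨ℓ₂, hℓ₂L⟩]; exact (φ ⟨ℓ₂, hℓ₂L⟩).2
  have hΦℓ₁L' : Φ ℓ₁ ∈ L' := by rw [hΦL ⟨ℓ₁, hℓ₁L⟩]; exact (φ ⟨ℓ₁, hℓ₁L⟩).2
  have e₁ : Φ '' (R '' B₂) = R' '' (Φ '' B₂) := by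
    refine block_eq_of_mem hP₁' hA₁ hA₁' (a := Φ ℓ₂) ?_ ?_
    · exact ⟨R ℓ₂, ⟨ℓ₂, hℓ₂B, rfl⟩, by rw [hRL ℓ₂ hℓ₂L]⟩
    · exact ⟨Φ ℓ₂, ⟨ℓ₂, hℓ₂B, rfl⟩, hR'L _ hΦℓ₂L'⟩
  have e₂ : Φ '' (R '' B₁) = R' '' (Φ '' B₁) := by
    refine block_eq_of_mem hP₂' hA₂ hA₂' (a := Φ ℓ₁) ?_ ?_
    · exact ⟨R ℓ₁, ⟨ℓ₁, hℓ₁B, rfl⟩, by rw [hRL ℓ₁ hℓ₁L]⟩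
    · exact ⟨Φ ℓ₁, ⟨ℓ₁, hℓ₁B, rfl⟩, hR'L _ hΦℓ₁L'⟩
  obtain ⟨p, -, hp⟩ := hmeet' _ hA₁ _ hA₂
  have h1 : Φ (R x) = p :=
    hp _ ⟨⟨R x, ⟨x, hx₂, rfl⟩, rfl⟩, ⟨R x, ⟨x, hx₁, rfl⟩, rfl⟩⟩
  have h2 : R' (Φ x) = p := by
    refine hp _ ⟨?_, ?_⟩
    · rw [e₁]; exact ⟨Φ x, ⟨x, hx₂, rfl⟩, rfl⟩
    · rw [e₂]; exact ⟨Φ x, ⟨x, hx₁, rfl⟩, rfl⟩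
  rw [h1, h2]
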